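/- arXiv:1108.2076 — 2 statements merged into one kernel-verified Lean document; each statement's English description precedes it below -/
import Mathlib

section
/- The function F⁻(z,w) = F⁺(1/z,w) satisfies the monodromy relation 𝓛_z F⁻ = w⁻¹·F⁻: for every ξ ∈ ℂ and every w ∈ ℂ∖{0}, G(−(ξ + 2πi), w) = w⁻¹ · G(−ξ, w). -/
/-!
Write `q = e^{-2π}`. In terms of the `q`-Pochhammer symbol `(a; q)_∞`,
`G(ζ, w) = e^{E(ζ)} (w e^{-iζ}; q)_∞ (w⁻¹ e^{iζ} q; q)_∞` with `E(ζ) = ζ²/(4π) + ζ/(1 - i)`.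
Replacing `ζ` by `ζ - 2πi` multiplies the first argument by `q` and divides the second by `q`,
so by `(a; q)_∞ = (1 - a) (aq; q)_∞` the first product loses the factor `1 - w e^{-iζ}` and the
second gains `1 - w⁻¹ e^{iζ}`, while the Gaussian factor picks up `e^{-iζ - πi} = -e^{-iζ}`.
These three changes combine to the factor `w⁻¹`.
-/

open Complex
open scoped Real

/-- Stein's function `F⁺(z,w)` written in the variable `ξ = log z`. -/
noncomputable def steinG (ξ w : ℂ) : ℂ :=
  Complex.exp (ξ ^ 2 / (4 * Real.pi) + ξ / (1 - Complex.I)) *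
    (∏' ν : ℕ, (1 - w * Complex.exp (-Complex.I * ξ - 2 * Real.pi * ν))) *
    (∏' μ : ℕ, (1 - w⁻¹ * Complex.exp (Complex.I * ξ - 2 * Real.pi * (μ + 1))))

section QPochhammer

variable {R : Type*}

noncomputable def qPochhammer [CommRing R] [TopologicalSpace R] (a q : R) : R :=
  ∏' n : ℕ, (1 - a * q ^ n)

variable [NormedCommRing R] [NormOneClass R] [CompleteSpace R]

theorem multipliable_one_sub_mul_pow (a : R) {q : R} (hq : ‖q‖ < 1) :
    Multipliable fun n : ℕ ↦ 1 - a * q ^ n := by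
  have hbound (n : ℕ) : ‖-(a * q ^ n)‖ ≤ ‖a‖ * ‖q‖ ^ n := by
    rw [norm_neg]
    exact (norm_mul_le _ _).trans
      (mul_le_mul_of_nonneg_left (norm_pow_le q n) (norm_nonneg a))
  have hsum : Summable fun n : ℕ ↦ ‖-(a * q ^ n)‖ :=
    Summable.of_nonneg_of_le (fun _ ↦ norm_nonneg _) hbound
      ((summable_geometric_of_lt_one (norm_nonneg q) hq).mul_left ‖a‖)
  simpa only [← sub_eq_add_neg] using multipliable_one_add_of_summable hsum

theorem qPochhammer_eq_one_sub_mul (a : R) {q : R} (hq : ‖q‖ < 1) :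
    qPochhammer a q = (1 - a) * qPochhammer (a * q) q := by
  have hshift : Multipliable fun n : ℕ ↦ 1 - a * q ^ (n + 1) := by
    simpa only [pow_succ', mul_assoc] using multipliable_one_sub_mul_pow (a * q) hq
  rw [qPochhammer, tprod_eq_zero_mul' (f := fun n ↦ 1 - a * q ^ n) hshift, qPochhammer]
  simp only [pow_zero, mul_one, pow_succ', mul_assoc]

end QPochhammer

noncomputable def steinExponent (ζ : ℂ) : ℂ :=
  ζ ^ 2 / (4 * π) + ζ / (1 - I)

theorem steinExponent_sub_two_pi_I (ζ : ℂ) :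
    steinExponent (ζ - 2 * π * I) = steinExponent ζ + (-I * ζ - π * I) := by
  have hπ : (π : ℂ) ≠ 0 := ofReal_ne_zero.mpr Real.pi_ne_zero
  have hI : (1 : ℂ) - I ≠ 0 := fun h ↦ by simpa using congrArg im h
  unfold steinExponent
  field_simp
  linear_combination (-4 * π ^ 2 * I) * I_sq

theorem exp_steinExponent_sub_two_pi_I (ζ : ℂ) :
    exp (steinExponent (ζ - 2 * π * I)) = exp (steinExponent ζ) * -exp (-I * ζ) := by
  rw [steinExponent_sub_two_pi_I, exp_add, sub_eq_add_neg, exp_add, exp_neg, exp_pi_mul_I]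
  ring

theorem steinG_eq_qPochhammer (ζ w : ℂ) :
    steinG ζ w = exp (steinExponent ζ) * qPochhammer (w * exp (-I * ζ)) (exp (-(2 * π))) *
      qPochhammer (w⁻¹ * exp (I * ζ - 2 * π)) (exp (-(2 * π))) := by
  have hgeom (a : ℂ) (n : ℕ) : exp (a - 2 * π * n) = exp a * exp (-(2 * π)) ^ n := by
    rw [← exp_nat_mul, ← exp_add]; ring_nf
  have hsucc (a : ℂ) (n : ℕ) : a - 2 * π * (n + 1) = a - 2 * π - 2 * π * n := by ring
  simp only [steinG, steinExponent, qPochhammer, hsucc, hgeom, mul_assoc w, mul_assoc w⁻¹]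

theorem steinG_sub_two_pi_I (ζ : ℂ) {w : ℂ} (hw : w ≠ 0) :
    steinG (ζ - 2 * π * I) w = w⁻¹ * steinG ζ w := by
  have hq : ‖exp (-(2 * π))‖ < 1 := by
    rw [norm_exp, Real.exp_lt_one_iff]
    simpa using Real.pi_pos
  have hfirst : exp (-I * (ζ - 2 * π * I)) = exp (-I * ζ) * exp (-(2 * π)) := by
    rw [← exp_add]; congr 1; linear_combination (2 * π) * I_sq
  have hsecond : exp (I * (ζ - 2 * π * I) - 2 * π) = exp (I * ζ) := by
    congr 1; linear_combination (-2 * π) * I_sq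
  have hsplit : exp (I * ζ - 2 * π) = exp (I * ζ) * exp (-(2 * π)) := by
    rw [← exp_add, sub_eq_add_neg]
  have hcancel : -exp (-I * ζ) * (1 - w⁻¹ * exp (I * ζ)) = w⁻¹ * (1 - w * exp (-I * ζ)) := by
    have : exp (-I * ζ) * exp (I * ζ) = 1 := by rw [← exp_add]; simp
    linear_combination w⁻¹ * this + exp (-I * ζ) * inv_mul_cancel₀ hw
  rw [steinG_eq_qPochhammer, steinG_eq_qPochhammer, exp_steinExponent_sub_two_pi_I,
    hfirst, hsecond, hsplit, ← mul_assoc w, ← mul_assoc w⁻¹ (exp (I * ζ)),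
    qPochhammer_eq_one_sub_mul (w * exp (-I * ζ)) hq,
    qPochhammer_eq_one_sub_mul (w⁻¹ * exp (I * ζ)) hq]
  linear_combination (exp (steinExponent ζ) * qPochhammer (w * exp (-I * ζ) * exp (-(2 * π)))
    (exp (-(2 * π))) * qPochhammer (w⁻¹ * exp (I * ζ) * exp (-(2 * π))) (exp (-(2 * π)))) * hcancel

/-- Monodromy relation `𝓛_z F⁻ = w⁻¹·F⁻` for `F⁻(z,w) = F⁺(1/z,w)`:
in the variable `ξ = log z`, `G(−(ξ + 2πi), w) = w⁻¹ · G(−ξ, w)`. -/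
theorem steinG_neg_monodromy (ξ w : ℂ) (hw : w ≠ 0) :
    steinG (-(ξ + 2 * Real.pi * Complex.I)) w = w⁻¹ * steinG (-ξ) w := by
  rw [neg_add, ← sub_eq_add_neg]
  exact steinG_sub_two_pi_I (-ξ) hw
end

section
/- The function (ξ,w) ↦ G(ξ,w) is holomorphic on ℂ × (ℂ∖{0}): the map p ↦ exp(p.1²/(4π) + p.1/(1−i)) · ∏_{ν=0}^∞ (1 − p.2·exp(−i·p.1 − 2πν)) · ∏_{μ=1}^∞ (1 − p.2⁻¹·exp(i·p.1 − 2πμ)) is complex-differentiable on the open set {p ∈ ℂ × ℂ : p.2 ≠ 0}. -/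
/-!
With `c = e^{-2π}`, both infinite products in `G` are of the form `∏ₙ (1 + q cⁿ)`, evaluated at
`q = -w e^{-iξ}` and at `q = -w⁻¹ e^{iξ - 2π}` respectively. Since `|c| < 1`, the terms `q cⁿ` are
dominated by a geometric series on every disc, so the product converges locally uniformly and is
an entire function of `q`. Composing with the holomorphic maps `(ξ, w) ↦ q`, the second of which
needs `w ≠ 0`, gives holomorphy of `G`.
-/

open Complex Metric

theorem differentiable_tprod_one_add_mul_pow {c : ℂ} (hc : ‖c‖ < 1) :
    Differentiable ℂ fun q : ℂ => ∏' n : ℕ, (1 + q * c ^ n) := by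
  intro q₀
  set R := ‖q₀‖ + 1
  have hbound : ∀ n : ℕ, ∀ q ∈ ball (0 : ℂ) R, ‖q * c ^ n‖ ≤ R * ‖c‖ ^ n := fun n q hq => by
    rw [norm_mul, norm_pow]
    gcongr
    exact (mem_ball_zero_iff.mp hq).le
  have hprod := Summable.hasProdLocallyUniformlyOn_nat_one_add isOpen_ball
    ((summable_geometric_of_lt_one (norm_nonneg c) hc).mul_left R)
    (.of_forall hbound) (fun n => by fun_prop)
  refine (hprod.differentiableOn (.of_forall fun s => ?_) isOpen_ball).differentiableAt
    (isOpen_ball.mem_nhds (by simp [R]))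
  simpa [Finset.prod_fn] using DifferentiableOn.finsetProd (fun n _ => by fun_prop)

theorem norm_exp_neg_two_pi_lt_one : ‖exp (-(2 * Real.pi))‖ < 1 := by
  rw [norm_exp]
  simp [Real.pi_pos]

theorem exp_sub_two_pi_mul_nat (z : ℂ) (n : ℕ) :
    exp (z - 2 * Real.pi * n) = exp z * exp (-(2 * Real.pi)) ^ n := by
  rw [← exp_nat_mul, ← exp_add]
  ring_nf

theorem steinG_eq (ξ w : ℂ) :
    steinG ξ w = exp (ξ ^ 2 / (4 * Real.pi) + ξ / (1 - I)) *
      (∏' n : ℕ, (1 + (-w * exp (-I * ξ)) * exp (-(2 * Real.pi)) ^ n)) *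
      (∏' n : ℕ, (1 + (-w⁻¹ * exp (I * ξ - 2 * Real.pi)) * exp (-(2 * Real.pi)) ^ n)) := by
  simp only [steinG]
  congr 2
  · exact tprod_congr fun n => by rw [exp_sub_two_pi_mul_nat]; ring
  · ext n
    rw [mul_add_one, ← sub_sub, sub_right_comm, exp_sub_two_pi_mul_nat]
    ring

/-- Stein's function `(ξ,w) ↦ G(ξ,w)` is holomorphic on `ℂ × (ℂ∖{0})`. -/
theorem steinG_differentiableOn :
    DifferentiableOn ℂ (fun p : ℂ × ℂ => steinG p.1 p.2) {p : ℂ × ℂ | p.2 ≠ 0} := by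
  set c : ℂ := exp (-(2 * Real.pi))
  have hP := differentiable_tprod_one_add_mul_pow norm_exp_neg_two_pi_lt_one
  have hleft : Differentiable ℂ fun p : ℂ × ℂ =>
      ∏' n : ℕ, (1 + (-p.2 * exp (-I * p.1)) * c ^ n) :=
    hP.comp (by fun_prop)
  have hright : DifferentiableOn ℂ (fun p : ℂ × ℂ =>
      ∏' n : ℕ, (1 + (-p.2⁻¹ * exp (I * p.1 - 2 * Real.pi)) * c ^ n)) {p | p.2 ≠ 0} := by
    have hinv : DifferentiableOn ℂ (fun p : ℂ × ℂ => p.2⁻¹) {p | p.2 ≠ 0} :=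
      differentiableOn_snd.inv fun _ hp => hp
    exact hP.comp_differentiableOn (by fun_prop)
  simp_rw [steinG_eq]
  exact ((Differentiable.mul (by fun_prop) hleft).differentiableOn).mul hright
end
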